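/- arXiv:1905.05936 — 2 statements merged into one kernel-verified Lean document; each statement's English description precedes it below -/
import Mathlib

section
/- Let A, B be bounded right-linear operators on a right quaternionic Banach space V satisfying ABA = A². Then for all φ ∈ V: (a) σ_A^S(Aφ) ⊆ σ_{BA}^S(φ), and (b) σ_{BA}^S(BAφ) ⊆ σ_A^S(φ). -/
open Filter Topology Set
open scoped Quaternion

noncomputable section

/-- The pseudo-resolvent operator `R_q(A) = A² - 2 Re(q) A + |q|² I`. -/
def Rq {V : Type*} [SeminormedAddCommGroup V] [NormedSpace ℝ V]
    (A : V →L[ℝ] V) (q : ℍ[ℝ]) : V →L[ℝ] V :=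
  A.comp A - (2 * q.re) • A + (‖q‖ ^ 2 : ℝ) • ContinuousLinearMap.id ℝ V

/-- Data of a right quaternionic scalar multiplication on a real normed space,
turning it into a right quaternionic Banach/Hilbert space. `rmul q v` is `v · q`. -/
structure RightAction (V : Type*) [SeminormedAddCommGroup V] [NormedSpace ℝ V] where
  rmul : ℍ[ℝ] → V →L[ℝ] V
  rmul_one : rmul 1 = ContinuousLinearMap.id ℝ V
  rmul_mul : ∀ p q : ℍ[ℝ], rmul (p * q) = (rmul q).comp (rmul p)
  rmul_add : ∀ p q : ℍ[ℝ], rmul (p + q) = rmul p + rmul q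
  rmul_real : ∀ r : ℝ, rmul ((r : ℝ) : ℍ[ℝ]) = r • ContinuousLinearMap.id ℝ V

/-- An operator is right `ℍ`-linear if it commutes with the right scalar action. -/
def RightLinear {V : Type*} [SeminormedAddCommGroup V] [NormedSpace ℝ V]
    (ρ : RightAction V) (A : V →L[ℝ] V) : Prop :=
  ∀ q : ℍ[ℝ], A.comp (ρ.rmul q) = (ρ.rmul q).comp A

/-- Right slice-regularity of `f : ℍ → V` on `U`. -/
def SliceRegularOn {V : Type*} [NormedAddCommGroup V] [NormedSpace ℝ V]
    (ρ : RightAction V) (f : ℍ[ℝ] → V) (U : Set ℍ[ℝ]) : Prop :=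
  ∀ I : ℍ[ℝ], I ^ 2 = -1 → ∀ x y : ℝ, ((x : ℍ[ℝ]) + y • I) ∈ U →
    ∃ fx fy : V,
      HasDerivAt (fun t : ℝ => f ((t : ℍ[ℝ]) + y • I)) fx x ∧
      HasDerivAt (fun t : ℝ => f ((x : ℍ[ℝ]) + t • I)) fy y ∧
      fx + ρ.rmul I fy = 0

/-- The S-spectrum of a bounded operator. -/
def SSpectrum {V : Type*} [SeminormedAddCommGroup V] [NormedSpace ℝ V]
    (A : V →L[ℝ] V) : Set ℍ[ℝ] :=
  {q | ¬ IsUnit (Rq A q)}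

/-- The approximate S-point spectrum. -/
def ApproxSSpectrum {V : Type*} [SeminormedAddCommGroup V] [NormedSpace ℝ V]
    (A : V →L[ℝ] V) : Set ℍ[ℝ] :=
  {q | ∃ φ : ℕ → V, (∀ n, ‖φ n‖ = 1) ∧
    Tendsto (fun n => ‖Rq A q (φ n)‖) atTop (nhds 0)}

/-- The local S-resolvent set of `A` at `φ`. -/
def localResolventSet {V : Type*} [NormedAddCommGroup V] [NormedSpace ℝ V]
    (ρ : RightAction V) (A : V →L[ℝ] V) (φ : V) : Set ℍ[ℝ] :=
  ⋃₀ {U : Set ℍ[ℝ] | IsOpen U ∧ ∃ f : ℍ[ℝ] → V, ContinuousOn f U ∧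
      SliceRegularOn ρ f U ∧ ∀ q ∈ U, Rq A q (f q) = φ}

/-- The local S-spectrum of `A` at `φ`. -/
def localSpectrum {V : Type*} [NormedAddCommGroup V] [NormedSpace ℝ V]
    (ρ : RightAction V) (A : V →L[ℝ] V) (φ : V) : Set ℍ[ℝ] :=
  (localResolventSet ρ A φ)ᶜ

/-- The single-valued extension property. -/
def HasSVEP {V : Type*} [NormedAddCommGroup V] [NormedSpace ℝ V]
    (ρ : RightAction V) (A : V →L[ℝ] V) : Prop :=
  ∀ U : Set ℍ[ℝ], IsOpen U → ∀ f : ℍ[ℝ] → V, ContinuousOn f U → SliceRegularOn ρ f U →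
    (∀ q ∈ U, Rq A q (f q) = 0) → ∀ q ∈ U, f q = 0

/-!
If `T S = T' T`, then `T` intertwines `R_q(S)` with `R_q(T')`, so a right-linear `T` carries a
local resolvent `f` of `S` at `φ` to the local resolvent `T ∘ f` of `T'` at `T φ`. The identity
`ABA = A²` supplies the two intertwinings `A (BA) = A A` and `(BA) A = (BA)(BA)`.
-/

namespace RightLinear

variable {V : Type*} [NormedAddCommGroup V] [NormedSpace ℝ V] {ρ : RightAction V}

theorem comp {S T : V →L[ℝ] V} (hS : RightLinear ρ S) (hT : RightLinear ρ T) :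
    RightLinear ρ (S.comp T) := fun q => by
  rw [ContinuousLinearMap.comp_assoc, hT q, ← ContinuousLinearMap.comp_assoc, hS q,
    ContinuousLinearMap.comp_assoc]

theorem apply_rmul {T : V →L[ℝ] V} (hT : RightLinear ρ T) (q : ℍ[ℝ]) (v : V) :
    T (ρ.rmul q v) = ρ.rmul q (T v) :=
  DFunLike.congr_fun (hT q) v

theorem sliceRegularOn_comp {T : V →L[ℝ] V} (hT : RightLinear ρ T) {f : ℍ[ℝ] → V}
    {U : Set ℍ[ℝ]} (hf : SliceRegularOn ρ f U) : SliceRegularOn ρ (T ∘ f) U := by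
  intro I hI x y hxy
  obtain ⟨fx, fy, hfx, hfy, hcr⟩ := hf I hI x y hxy
  refine ⟨T fx, T fy, T.hasFDerivAt.comp_hasDerivAt x hfx,
    T.hasFDerivAt.comp_hasDerivAt y hfy, ?_⟩
  rw [← hT.apply_rmul, ← map_add, hcr, map_zero]

end RightLinear

section Intertwining

variable {V : Type*} [NormedAddCommGroup V] [NormedSpace ℝ V]

theorem comp_Rq_eq_Rq_comp {S T T' : V →L[ℝ] V} (h : T.comp S = T'.comp T) (q : ℍ[ℝ]) :
    T.comp (Rq S q) = (Rq T' q).comp T := by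
  have h₂ : T.comp (S.comp S) = (T'.comp T').comp T := by
    rw [← ContinuousLinearMap.comp_assoc, h, ContinuousLinearMap.comp_assoc, h,
      ContinuousLinearMap.comp_assoc]
  simp only [Rq, ContinuousLinearMap.comp_add, ContinuousLinearMap.comp_sub,
    ContinuousLinearMap.comp_smul, ContinuousLinearMap.add_comp, ContinuousLinearMap.sub_comp,
    ContinuousLinearMap.smul_comp, ContinuousLinearMap.comp_id, ContinuousLinearMap.id_comp,
    h, h₂]

theorem localResolventSet_subset_of_comp_eq {ρ : RightAction V} {S T T' : V →L[ℝ] V}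
    (hT : RightLinear ρ T) (h : T.comp S = T'.comp T) (φ : V) :
    localResolventSet ρ S φ ⊆ localResolventSet ρ T' (T φ) := by
  rintro q ⟨U, ⟨hU, f, hfc, hfr, hf⟩, hqU⟩
  refine ⟨U, ⟨hU, T ∘ f, T.continuous.comp_continuousOn hfc, hT.sliceRegularOn_comp hfr,
    fun p hp => ?_⟩, hqU⟩
  rw [Function.comp_apply, ← ContinuousLinearMap.comp_apply, ← comp_Rq_eq_Rq_comp h,
    ContinuousLinearMap.comp_apply, hf p hp]

theorem localSpectrum_apply_subset_of_comp_eq {ρ : RightAction V} {S T T' : V →L[ℝ] V}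
    (hT : RightLinear ρ T) (h : T.comp S = T'.comp T) (φ : V) :
    localSpectrum ρ T' (T φ) ⊆ localSpectrum ρ S φ :=
  compl_subset_compl.mpr (localResolventSet_subset_of_comp_eq hT h φ)

end Intertwining

theorem stmt13_general {V : Type*} [NormedAddCommGroup V] [NormedSpace ℝ V]
    (ρ : RightAction V) (A B : V →L[ℝ] V) (hA : RightLinear ρ A) (hB : RightLinear ρ B)
    (hABA : A.comp (B.comp A) = A.comp A) (φ : V) :
    localSpectrum ρ A (A φ) ⊆ localSpectrum ρ (B.comp A) φ ∧
    localSpectrum ρ (B.comp A) ((B.comp A) φ) ⊆ localSpectrum ρ A φ := by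
  have hBABA : (B.comp A).comp A = (B.comp A).comp (B.comp A) := by
    rw [ContinuousLinearMap.comp_assoc B A (B.comp A), hABA, ContinuousLinearMap.comp_assoc]
  exact ⟨localSpectrum_apply_subset_of_comp_eq hA hABA φ,
    localSpectrum_apply_subset_of_comp_eq (hB.comp hA) hBABA φ⟩

/-- If `A B A = A²`, then (a) `σ_A^S(Aφ) ⊆ σ_{BA}^S(φ)` and (b)
`σ_{BA}^S(BAφ) ⊆ σ_A^S(φ)` for all `φ`. -/
theorem stmt13 {V : Type*} [NormedAddCommGroup V] [NormedSpace ℝ V] [CompleteSpace V]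
    (ρ : RightAction V) (A B : V →L[ℝ] V) (hA : RightLinear ρ A) (hB : RightLinear ρ B)
    (hABA : A.comp (B.comp A) = A.comp A) (φ : V) :
    localSpectrum ρ A (A φ) ⊆ localSpectrum ρ (B.comp A) φ ∧
    localSpectrum ρ (B.comp A) ((B.comp A) φ) ⊆ localSpectrum ρ A φ :=
  stmt13_general ρ A B hA hB hABA φ

end
end

section
/- Let A be a bounded right-linear operator on a right quaternionic Banach space V. Then for all φ, ψ ∈ V and p, q ∈ ℍ: (a) σ_A^S(0) = ∅; (b) σ_A^S(φq + ψp) ⊆ σ_A^S(φ) ∪ σ_A^S(ψ); (c) σ_A^S(Bφ) ⊆ σ_A^S(φ) for every B ∈ B(V) commuting with A. -/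
open Filter Topology Set
open scoped Quaternion

noncomputable section

/-!
Each of the three properties says that the set of `φ` for which a fixed `s` lies in the local
resolvent set is stable under an operation, so it suffices to transform local solutions
`R_p(A) f(p) = φ`. Sums and images under right-linear operators commuting with `A` are
immediate. Right multiplication by `q` does not preserve slice-regularity, but right
multiplication by `c ≠ 0` combined with the substitution `p ↦ c p c⁻¹` does, since this
substitution permutes the slices and leaves `R_p(A)` unchanged. To keep `s` in the domain, one
writes `φ q = t⁻¹ (φ (1 + t q) - φ)` with `t` so small that conjugation by `1 + t q` moves `s`
only inside the (open) local resolvent set.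
-/

namespace Quaternion

theorem re_mul_comm (a b : ℍ[ℝ]) : (a * b).re = (b * a).re := by
  simp only [re_mul]; ring

variable {c : ℍ[ℝ]}

theorem re_mul_mul_inv (hc : c ≠ 0) (s : ℍ[ℝ]) : (c * s * c⁻¹).re = s.re := by
  rw [re_mul_comm, ← mul_assoc, inv_mul_cancel₀ hc, one_mul]

theorem norm_mul_mul_inv (hc : c ≠ 0) (s : ℍ[ℝ]) : ‖c * s * c⁻¹‖ = ‖s‖ := by
  rw [norm_mul, norm_mul, norm_inv, mul_right_comm, mul_inv_cancel₀ (norm_ne_zero_iff.2 hc), one_mul]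

theorem mul_coe_add_smul_mul_inv (hc : c ≠ 0) (x y : ℝ) (I : ℍ[ℝ]) :
    c * ((x : ℍ[ℝ]) + y • I) * c⁻¹ = (x : ℍ[ℝ]) + y • (c * I * c⁻¹) := by
  rw [mul_add, add_mul, ← coe_commutes, mul_inv_cancel_right₀ hc, mul_smul_comm, smul_mul_assoc]

theorem mul_mul_inv_sq (hc : c ≠ 0) (I : ℍ[ℝ]) : (c * I * c⁻¹) ^ 2 = c * I ^ 2 * c⁻¹ := by
  simp only [sq, mul_assoc, inv_mul_cancel_left₀ hc]

end Quaternion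

section Rq

variable {V : Type*} [SeminormedAddCommGroup V] [NormedSpace ℝ V]

theorem Rq_apply_comm {A C : V →L[ℝ] V} (h : A.comp C = C.comp A) (q : ℍ[ℝ]) (v : V) :
    Rq A q (C v) = C (Rq A q v) := by
  have hAC : ∀ w, A (C w) = C (A w) := fun w => DFunLike.congr_fun h w
  simp [Rq, hAC]

theorem Rq_mul_mul_inv (A : V →L[ℝ] V) {c : ℍ[ℝ]} (hc : c ≠ 0) (q : ℍ[ℝ]) :
    Rq A (c * q * c⁻¹) = Rq A q := by
  rw [Rq, Rq, Quaternion.re_mul_mul_inv hc, Quaternion.norm_mul_mul_inv hc]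

end Rq

namespace RightAction

variable {V : Type*} [SeminormedAddCommGroup V] [NormedSpace ℝ V] (ρ : RightAction V)

theorem rmul_smul (t : ℝ) (q : ℍ[ℝ]) : ρ.rmul (t • q) = t • ρ.rmul q := by
  rw [← Quaternion.coe_mul_eq_smul, ρ.rmul_mul, ρ.rmul_real]
  ext v
  simp

theorem rightLinear_smul_id (r : ℝ) : RightLinear ρ (r • ContinuousLinearMap.id ℝ V) := by
  intro q
  ext v
  simp

end RightAction

namespace SliceRegularOn

variable {V : Type*} [NormedAddCommGroup V] [NormedSpace ℝ V] {ρ : RightAction V}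
  {f g : ℍ[ℝ] → V} {U U' : Set ℍ[ℝ]}

theorem const (ρ : RightAction V) (v : V) (U : Set ℍ[ℝ]) : SliceRegularOn ρ (fun _ => v) U :=
  fun _ _ _ _ _ => ⟨0, 0, hasDerivAt_const _ _, hasDerivAt_const _ _, by simp⟩

theorem mono (hf : SliceRegularOn ρ f U) (h : U' ⊆ U) : SliceRegularOn ρ f U' :=
  fun I hI x y hxy => hf I hI x y (h hxy)

theorem add (hf : SliceRegularOn ρ f U) (hg : SliceRegularOn ρ g U) :
    SliceRegularOn ρ (fun p => f p + g p) U := by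
  intro I hI x y hxy
  obtain ⟨fx, fy, hfx, hfy, hf0⟩ := hf I hI x y hxy
  obtain ⟨gx, gy, hgx, hgy, hg0⟩ := hg I hI x y hxy
  refine ⟨fx + gx, fy + gy, hfx.add hgx, hfy.add hgy, ?_⟩
  rw [map_add, add_add_add_comm, hf0, hg0, add_zero]

theorem clm_comp {B : V →L[ℝ] V} (hB : RightLinear ρ B) (hf : SliceRegularOn ρ f U) :
    SliceRegularOn ρ (fun p => B (f p)) U := by
  intro I hI x y hxy
  obtain ⟨fx, fy, hfx, hfy, hf0⟩ := hf I hI x y hxy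
  refine ⟨B fx, B fy, B.hasFDerivAt.comp_hasDerivAt x hfx, B.hasFDerivAt.comp_hasDerivAt y hfy, ?_⟩
  rw [← ContinuousLinearMap.comp_apply, ← hB I, ContinuousLinearMap.comp_apply, ← map_add, hf0,
    map_zero]

/-- Conjugation `p ↦ c p c⁻¹` maps the slice through `I` onto the slice through `c I c⁻¹`; the
factor `c` on the right restores the Cauchy–Riemann equation, because
`(v · c) · I = (v · c I c⁻¹) · c`. -/
theorem comp_conj {c : ℍ[ℝ]} (hc : c ≠ 0) (hf : SliceRegularOn ρ f U) :
    SliceRegularOn ρ (fun p => ρ.rmul c (f (c * p * c⁻¹))) ((fun p => c * p * c⁻¹) ⁻¹' U) := by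
  intro I hI x y hxy
  have hI' : (c * I * c⁻¹) ^ 2 = -1 := by
    rw [Quaternion.mul_mul_inv_sq hc, hI, mul_neg_one, neg_mul, mul_inv_cancel₀ hc]
  have hxy' := hxy
  simp only [mem_preimage, Quaternion.mul_coe_add_smul_mul_inv hc] at hxy'
  obtain ⟨fx, fy, hfx, hfy, hf0⟩ := hf _ hI' x y hxy'
  refine ⟨ρ.rmul c fx, ρ.rmul c fy, ?_, ?_, ?_⟩
  · simp only [Quaternion.mul_coe_add_smul_mul_inv hc]
    exact (ρ.rmul c).hasFDerivAt.comp_hasDerivAt x hfx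
  · simp only [Quaternion.mul_coe_add_smul_mul_inv hc]
    exact (ρ.rmul c).hasFDerivAt.comp_hasDerivAt y hfy
  · have hcI : ρ.rmul I (ρ.rmul c fy) = ρ.rmul c (ρ.rmul (c * I * c⁻¹) fy) := by
      rw [← ContinuousLinearMap.comp_apply, ← ContinuousLinearMap.comp_apply, ← ρ.rmul_mul,
        ← ρ.rmul_mul, inv_mul_cancel_right₀ hc]
    rw [hcI, ← map_add, hf0, map_zero]

end SliceRegularOn

section LocalResolvent

variable {V : Type*} [NormedAddCommGroup V] [NormedSpace ℝ V] {ρ : RightAction V}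
  {A : V →L[ℝ] V} {φ : V} {s : ℍ[ℝ]}

theorem mem_localResolventSet_iff :
    s ∈ localResolventSet ρ A φ ↔ ∃ U f, IsOpen U ∧ s ∈ U ∧ ContinuousOn f U ∧
      SliceRegularOn ρ f U ∧ ∀ q ∈ U, Rq A q (f q) = φ := by
  simp only [localResolventSet, mem_sUnion, mem_ofPred_eq]
  constructor
  · rintro ⟨U, ⟨hU, f, hf, hfreg, hfeq⟩, hsU⟩
    exact ⟨U, f, hU, hsU, hf, hfreg, hfeq⟩
  · rintro ⟨U, f, hU, hsU, hf, hfreg, hfeq⟩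
    exact ⟨U, ⟨hU, f, hf, hfreg, hfeq⟩, hsU⟩

theorem isOpen_localResolventSet (ρ : RightAction V) (A : V →L[ℝ] V) (φ : V) :
    IsOpen (localResolventSet ρ A φ) :=
  isOpen_sUnion fun _ hU => hU.1

theorem mem_localResolventSet_zero (ρ : RightAction V) (A : V →L[ℝ] V) (s : ℍ[ℝ]) :
    s ∈ localResolventSet ρ A 0 :=
  mem_localResolventSet_iff.2 ⟨univ, fun _ => 0, isOpen_univ, mem_univ s, continuousOn_const,
    SliceRegularOn.const ρ 0 univ, fun _ _ => map_zero _⟩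

theorem mem_localResolventSet_add {ψ : V} (hφ : s ∈ localResolventSet ρ A φ)
    (hψ : s ∈ localResolventSet ρ A ψ) : s ∈ localResolventSet ρ A (φ + ψ) := by
  obtain ⟨U, f, hU, hsU, hf, hfreg, hfeq⟩ := mem_localResolventSet_iff.1 hφ
  obtain ⟨U', g, hU', hsU', hg, hgreg, hgeq⟩ := mem_localResolventSet_iff.1 hψ
  refine mem_localResolventSet_iff.2 ⟨U ∩ U', fun p => f p + g p, hU.inter hU', ⟨hsU, hsU'⟩,
    (hf.mono inter_subset_left).add (hg.mono inter_subset_right),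
    (hfreg.mono inter_subset_left).add (hgreg.mono inter_subset_right), fun q hq => ?_⟩
  rw [map_add, hfeq q hq.1, hgeq q hq.2]

theorem mem_localResolventSet_apply {C : V →L[ℝ] V} (hC : RightLinear ρ C)
    (hCA : A.comp C = C.comp A) (h : s ∈ localResolventSet ρ A φ) :
    s ∈ localResolventSet ρ A (C φ) := by
  obtain ⟨U, f, hU, hsU, hf, hfreg, hfeq⟩ := mem_localResolventSet_iff.1 h
  refine mem_localResolventSet_iff.2 ⟨U, fun p => C (f p), hU, hsU,
    C.continuous.comp_continuousOn hf, hfreg.clm_comp hC, fun q hq => ?_⟩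
  rw [Rq_apply_comm hCA, hfeq q hq]

theorem mem_localResolventSet_rmul_of_mul_mul_inv_mem (hA : RightLinear ρ A) {c : ℍ[ℝ]}
    (hc : c ≠ 0) (h : c * s * c⁻¹ ∈ localResolventSet ρ A φ) :
    s ∈ localResolventSet ρ A (ρ.rmul c φ) := by
  obtain ⟨U, f, hU, hsU, hf, hfreg, hfeq⟩ := mem_localResolventSet_iff.1 h
  have hconj : Continuous fun p : ℍ[ℝ] => c * p * c⁻¹ := by fun_prop
  refine mem_localResolventSet_iff.2 ⟨_, fun p => ρ.rmul c (f (c * p * c⁻¹)), hU.preimage hconj,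
    hsU, (ρ.rmul c).continuous.comp_continuousOn (hf.comp hconj.continuousOn fun _ hp => hp),
    hfreg.comp_conj hc, fun q hq => ?_⟩
  rw [Rq_apply_comm (hA c), ← Rq_mul_mul_inv A hc, hfeq _ hq]

variable (ρ A) in
def localResolventSubmodule (s : ℍ[ℝ]) : Submodule ℝ V where
  carrier := {φ | s ∈ localResolventSet ρ A φ}
  zero_mem' := mem_localResolventSet_zero ρ A s
  add_mem' := mem_localResolventSet_add
  smul_mem' r _ h := mem_localResolventSet_apply (ρ.rightLinear_smul_id r) (by ext; simp) h

theorem rmul_mem_localResolventSubmodule (hA : RightLinear ρ A) (q : ℍ[ℝ])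
    (h : φ ∈ localResolventSubmodule ρ A s) : ρ.rmul q φ ∈ localResolventSubmodule ρ A s := by
  have hnear : ∀ᶠ c in 𝓝 (1 : ℍ[ℝ]), c ≠ 0 ∧ c * s * c⁻¹ ∈ localResolventSet ρ A φ := by
    refine (eventually_ne_nhds one_ne_zero).and (ContinuousAt.eventually_mem ?_ ?_)
    · exact (continuousAt_id.mul continuousAt_const).mul (continuousAt_inv₀ one_ne_zero)
    · simpa using (isOpen_localResolventSet ρ A φ).mem_nhds h
  have hlim : Tendsto (fun t : ℝ => 1 + t • q) (𝓝[≠] 0) (𝓝 1) := by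
    have h0 : Tendsto (fun t : ℝ => 1 + t • q) (𝓝 0) (𝓝 (1 + (0 : ℝ) • q)) :=
      Continuous.tendsto (by fun_prop) 0
    simpa using h0.mono_left nhdsWithin_le_nhds
  obtain ⟨t, ⟨hc, hconj⟩, ht⟩ := ((hlim.eventually hnear).and self_mem_nhdsWithin).exists
  have hsplit : ρ.rmul q φ = t⁻¹ • (ρ.rmul (1 + t • q) φ - φ) := by
    rw [ρ.rmul_add, ρ.rmul_one, ρ.rmul_smul]
    simp [smul_smul, inv_mul_cancel₀ (show t ≠ 0 from ht)]
  rw [hsplit]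
  exact Submodule.smul_mem _ _
    (Submodule.sub_mem _ (mem_localResolventSet_rmul_of_mul_mul_inv_mem hA hc hconj) h)

end LocalResolvent

section LocalSpectrum

variable {V : Type*} [NormedAddCommGroup V] [NormedSpace ℝ V] {ρ : RightAction V}
  {A : V →L[ℝ] V}

theorem localSpectrum_zero (ρ : RightAction V) (A : V →L[ℝ] V) : localSpectrum ρ A 0 = ∅ :=
  eq_empty_iff_forall_notMem.2 fun s hs => hs (mem_localResolventSet_zero ρ A s)

theorem localSpectrum_add_subset (φ ψ : V) :
    localSpectrum ρ A (φ + ψ) ⊆ localSpectrum ρ A φ ∪ localSpectrum ρ A ψ := by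
  rw [localSpectrum, localSpectrum, localSpectrum, ← compl_inter, compl_subset_compl]
  exact fun _ hs => mem_localResolventSet_add hs.1 hs.2

theorem localSpectrum_rmul_subset (hA : RightLinear ρ A) (q : ℍ[ℝ]) (φ : V) :
    localSpectrum ρ A (ρ.rmul q φ) ⊆ localSpectrum ρ A φ :=
  compl_subset_compl.2 fun s => rmul_mem_localResolventSubmodule (s := s) hA q

theorem localSpectrum_apply_subset {B : V →L[ℝ] V} (hB : RightLinear ρ B)
    (hAB : A.comp B = B.comp A) (φ : V) : localSpectrum ρ A (B φ) ⊆ localSpectrum ρ A φ :=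
  compl_subset_compl.2 fun _ => mem_localResolventSet_apply hB hAB

end LocalSpectrum

theorem stmt15_general {V : Type*} [NormedAddCommGroup V] [NormedSpace ℝ V]
    (ρ : RightAction V) (A : V →L[ℝ] V) (hA : RightLinear ρ A) :
    localSpectrum ρ A 0 = ∅ ∧
    (∀ (φ ψ : V) (p q : ℍ[ℝ]),
      localSpectrum ρ A (ρ.rmul q φ + ρ.rmul p ψ) ⊆
        localSpectrum ρ A φ ∪ localSpectrum ρ A ψ) ∧
    (∀ B : V →L[ℝ] V, RightLinear ρ B → B.comp A = A.comp B →
      ∀ φ : V, localSpectrum ρ A (B φ) ⊆ localSpectrum ρ A φ) :=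
  ⟨localSpectrum_zero ρ A,
    fun φ ψ p q => (localSpectrum_add_subset _ _).trans
      (union_subset_union (localSpectrum_rmul_subset hA q φ) (localSpectrum_rmul_subset hA p ψ)),
    fun _ hB hBA φ => localSpectrum_apply_subset hB hBA.symm φ⟩

/-- Basic properties of the local S-spectrum: (a) `σ_A^S(0) = ∅`; (b)
`σ_A^S(φ q + ψ p) ⊆ σ_A^S(φ) ∪ σ_A^S(ψ)`; (c) `σ_A^S(Bφ) ⊆ σ_A^S(φ)` for every bounded
right-linear `B` commuting with `A`. -/
theorem stmt15 {V : Type*} [NormedAddCommGroup V] [NormedSpace ℝ V] [CompleteSpace V]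
    (ρ : RightAction V) (A : V →L[ℝ] V) (hA : RightLinear ρ A) :
    localSpectrum ρ A 0 = ∅ ∧
    (∀ (φ ψ : V) (p q : ℍ[ℝ]),
      localSpectrum ρ A (ρ.rmul q φ + ρ.rmul p ψ) ⊆
        localSpectrum ρ A φ ∪ localSpectrum ρ A ψ) ∧
    (∀ B : V →L[ℝ] V, RightLinear ρ B → B.comp A = A.comp B →
      ∀ φ : V, localSpectrum ρ A (B φ) ⊆ localSpectrum ρ A φ) :=
  stmt15_general ρ A hA

end
end
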